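/- arXiv:math/0603187 — 2 statements merged into one kernel-verified Lean document; each statement's English description precedes it below -/
import Mathlib

section
/- Let p = m > 1, 1 ≤ m ≤ N, R > 0, β < -1, and let Ω = {(η,τ) ∈ ℝ^m × ℝ^{N-m} : |η| < R}. For every C¹ function u with compact support in Ω \ ({0} × ℝ^{N-m}), (|β+1|/p)^p ∫_Ω |u|^p |η|^{-p} (ln(R/|η|))^β dη dτ ≤ ∫_Ω |∇u|^p (ln(R/|η|))^{p+β} dη dτ. -/
/-!
Write `L = log (R / |η|)` and `q(t) = (β + 1)⁻¹ log (R / t) ^ (β + 1) t ^ (-m)`. The vector field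
`F(η, τ) = q(|η|) η` satisfies `div F = -|η| ^ (-m) L ^ β` on `0 < |η| < R`, so integrating by
parts against a `C¹` function `φ` supported there, and using `|F| = |q(|η|)| |η|`, gives the case
`p = 1`: `|β + 1| ∫ φ |η| ^ (-m) L ^ β ≤ ∫ |∇φ| |η| ^ (1 - m) L ^ (β + 1)`.
Since `m > 1`, `φ = |u| ^ m` is `C¹` with `|∇φ| ≤ m |u| ^ (m - 1) |∇u|`, and Hölder's inequality
with exponents `m / (m - 1)` and `m` bounds the right-hand side by `m A ^ (1 - 1/m) B ^ (1/m)`,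
where `A` and `B` are the two integrals of the theorem. Dividing by `A ^ (1 - 1/m)` gives
`A ≤ (m / |β + 1|) ^ m B`.
-/

open Real MeasureTheory

noncomputable section

lemma norm_gradient {F : Type*} [NormedAddCommGroup F] [InnerProductSpace ℝ F] [CompleteSpace F]
    (f : F → ℝ) (x : F) : ‖gradient f x‖ = ‖fderiv ℝ f x‖ := by
  rw [← toDual_gradient, LinearIsometryEquiv.norm_map]

lemma tsupport_abs_rpow_subset {X : Type*} [TopologicalSpace X] {u : X → ℝ} {p : ℝ} (hp : p ≠ 0) :
    tsupport (fun x => |u x| ^ p) ⊆ tsupport u :=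
  tsupport_comp_subset (g := fun t : ℝ => |t| ^ p) (by simp [zero_rpow hp]) u

lemma integrable_of_continuousOn_of_support_subset {X : Type*} [TopologicalSpace X]
    [MeasurableSpace X] [OpensMeasurableSpace X] [T2Space X] {μ : Measure X}
    [IsFiniteMeasureOnCompacts μ] {g : X → ℝ} {K V : Set X} (hK : IsCompact K) (hKV : K ⊆ V)
    (hg : ContinuousOn g V) (hgK : Function.support g ⊆ K) : Integrable g μ :=
  (integrableOn_iff_integrable_of_support_subset hgK).1 ((hg.mono hKV).integrableOn_compact hK)

lemma memLp_rpow_of_integrable {α : Type*} [MeasurableSpace α] {μ : Measure α} {f : α → ℝ}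
    {b : ℝ} (hb : 0 < b) (hf0 : 0 ≤ f) (hf : Integrable f μ) :
    MemLp (fun x => f x ^ b) (ENNReal.ofReal b⁻¹) μ := by
  have := (memLp_one_iff_integrable.2 hf).norm_rpow_div (ENNReal.ofReal b)
  simp only [ENNReal.toReal_ofReal hb.le, Real.norm_of_nonneg (hf0 _), one_div] at this
  rwa [← ENNReal.ofReal_inv_of_pos hb] at this

lemma integrable_rpow_mul_rpow {α : Type*} [MeasurableSpace α] {μ : Measure α} {f g : α → ℝ}
    {a : ℝ} (ha0 : 0 ≤ a) (ha1 : a ≤ 1) (hf0 : 0 ≤ f) (hg0 : 0 ≤ g) (hf : Integrable f μ)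
    (hg : Integrable g μ) : Integrable (fun x => f x ^ (1 - a) * g x ^ a) μ := by
  refine ((hf.const_mul (1 - a)).add (hg.const_mul a)).mono'
    ((hf.aemeasurable.pow_const _).mul (hg.aemeasurable.pow_const _)).aestronglyMeasurable
    (ae_of_all _ fun x => ?_)
  rw [Real.norm_of_nonneg (mul_nonneg (rpow_nonneg (hf0 x) _) (rpow_nonneg (hg0 x) _))]
  exact geom_mean_le_arith_mean2_weighted (by linarith) ha0 (hf0 x) (hg0 x) (by ring)

lemma integral_rpow_mul_rpow_le {α : Type*} [MeasurableSpace α] {μ : Measure α} {f g : α → ℝ}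
    {a : ℝ} (ha0 : 0 < a) (ha1 : a < 1) (hf0 : 0 ≤ f) (hg0 : 0 ≤ g) (hf : Integrable f μ)
    (hg : Integrable g μ) :
    ∫ x, f x ^ (1 - a) * g x ^ a ∂μ ≤ (∫ x, f x ∂μ) ^ (1 - a) * (∫ x, g x ∂μ) ^ a := by
  have hpq := Real.HolderConjugate.one_sub_inv_inv ha0 ha1
  have h := integral_mul_le_Lp_mul_Lq_of_nonneg hpq
    (ae_of_all _ fun x => rpow_nonneg (hf0 x) _) (ae_of_all _ fun x => rpow_nonneg (hg0 x) _)
    (memLp_rpow_of_integrable (by linarith) hf0 hf) (memLp_rpow_of_integrable ha0 hg0 hg)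
  simp only [← rpow_mul (hf0 _), ← rpow_mul (hg0 _), one_div, inv_inv,
    mul_inv_cancel₀ (by linarith : 1 - a ≠ 0), mul_inv_cancel₀ ha0.ne', rpow_one] at h
  exact h

lemma rpow_mul_le_of_mul_le_rpow_mul_rpow {k A B p : ℝ} (hp : 0 < p) (hk : 0 ≤ k) (hA : 0 ≤ A)
    (hB : 0 ≤ B) (h : k * A ≤ A ^ (1 - p⁻¹) * B ^ p⁻¹) : k ^ p * A ≤ B := by
  rcases hA.eq_or_lt with rfl | hA
  · simpa using hB
  have hsplit : A = A ^ (1 - p⁻¹) * A ^ p⁻¹ := by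
    rw [← rpow_add hA, sub_add_cancel, rpow_one]
  have hroot : k * A ^ p⁻¹ ≤ B ^ p⁻¹ := by
    refine le_of_mul_le_mul_left ?_ (rpow_pos_of_pos hA (1 - p⁻¹))
    calc A ^ (1 - p⁻¹) * (k * A ^ p⁻¹) = k * A := by
          conv_rhs => rw [hsplit]
          ring
      _ ≤ _ := h
  have := rpow_le_rpow (by positivity) hroot hp.le
  rwa [mul_rpow hk (by positivity), rpow_inv_rpow hA.le hp.ne', rpow_inv_rpow hB hp.ne'] at this

lemma rpow_one_sub_inv_mul_rpow_inv {p β x y s L : ℝ} (hp : 0 < p) (hx : 0 ≤ x) (hy : 0 ≤ y)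
    (hs : 0 < s) (hL : 0 < L) :
    (x ^ p * s ^ (-p) * L ^ β) ^ (1 - p⁻¹) * (y ^ p * L ^ (p + β)) ^ p⁻¹ =
      x ^ (p - 1) * y * (s ^ (1 - p) * L ^ (β + 1)) := by
  rw [mul_rpow (by positivity) (by positivity), mul_rpow (by positivity) (by positivity),
    mul_rpow (by positivity) (by positivity), ← rpow_mul hx, ← rpow_mul hs.le, ← rpow_mul hL.le,
    ← rpow_mul hy, ← rpow_mul hL.le, mul_inv_cancel₀ hp.ne', rpow_one]
  have e1 : p * (1 - p⁻¹) = p - 1 := by field_simp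
  have e2 : -p * (1 - p⁻¹) = 1 - p := by field_simp; ring
  have e3 : β * (1 - p⁻¹) + (p + β) * p⁻¹ = β + 1 := by field_simp; ring
  rw [e1, e2, ← e3, rpow_add hL]
  ring

namespace LogHardy

/-- Solves `t q' + n q = -t ^ (-n) log (R / t) ^ β`. -/
def logProfile (R β n t : ℝ) : ℝ := (β + 1)⁻¹ * log (R / t) ^ (β + 1) * t ^ (-n)

lemma hasDerivAt_logProfile {R β n t : ℝ} (hβ : β ≠ -1) (ht : 0 < t) (htR : t < R) :
    HasDerivAt (logProfile R β n)
      (-(log (R / t) ^ β * t ^ (-n) + n * logProfile R β n t) / t) t := by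
  have hL : 0 < log (R / t) := log_pos ((one_lt_div ht).2 htR)
  have hlog : HasDerivAt (fun t => log (R / t)) (-t⁻¹) t := by
    have hR : 0 < R := ht.trans htR
    have := ((hasDerivAt_inv ht.ne').const_mul R).log (div_pos hR ht).ne'
    refine this.congr_deriv ?_
    field_simp
  have h := ((hlog.rpow_const (p := β + 1) (Or.inl hL.ne')).const_mul (β + 1)⁻¹).mul
    (hasDerivAt_rpow_const (p := -n) (Or.inl ht.ne'))
  refine h.congr_deriv ?_
  have hβ' : β + 1 ≠ 0 := fun h => hβ (by linarith)
  rw [logProfile, rpow_sub_one ht.ne', rpow_add_one hL.ne']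
  simp only [add_sub_cancel_right]
  field_simp
  ring

lemma contDiffOn_logProfile {R β n : ℝ} : ContDiffOn ℝ 1 (logProfile R β n) (Set.Ioo 0 R) := by
  intro t ⟨ht, htR⟩
  have hL : 0 < log (R / t) := log_pos ((one_lt_div ht).2 htR)
  refine ContDiffAt.contDiffWithinAt ?_
  exact (contDiffAt_const.mul (((contDiffAt_const.div contDiffAt_id ht.ne').log
    (div_pos (ht.trans htR) ht).ne').rpow_const_of_ne hL.ne')).mul
    (contDiffAt_id.rpow_const_of_ne ht.ne')

lemma abs_logProfile {R β n t : ℝ} (ht : 0 < t) (htR : t < R) :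
    |logProfile R β n t| = |β + 1|⁻¹ * log (R / t) ^ (β + 1) * t ^ (-n) := by
  have hL : 0 < log (R / t) := log_pos ((one_lt_div ht).2 htR)
  rw [logProfile, abs_mul, abs_mul, abs_inv, abs_of_pos (rpow_pos_of_pos hL _),
    abs_of_pos (rpow_pos_of_pos ht _)]

variable {N m : ℕ} (hmN : m ≤ N)

/-- `|η|` for `ξ = (η, τ)`, where `η` is made of the first `m` coordinates of `ξ`. -/
def etaNorm (ξ : EuclideanSpace ℝ (Fin N)) : ℝ :=
  √(∑ i : Fin m, ξ (Fin.castLE hmN i) ^ 2)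

def etaUnit (i : Fin m) : EuclideanSpace ℝ (Fin N) :=
  EuclideanSpace.single (Fin.castLE hmN i) 1

def etaPart (ξ : EuclideanSpace ℝ (Fin N)) : EuclideanSpace ℝ (Fin N) :=
  ∑ i : Fin m, ξ (Fin.castLE hmN i) • etaUnit hmN i

def radialField (q : ℝ → ℝ) (i : Fin m) (ξ : EuclideanSpace ℝ (Fin N)) : ℝ :=
  q (etaNorm hmN ξ) * ξ (Fin.castLE hmN i)

/-- `Ω` with the singular set `η = 0` removed. -/
def shell (R : ℝ) : Set (EuclideanSpace ℝ (Fin N)) :=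
  {ξ | 0 < etaNorm hmN ξ ∧ etaNorm hmN ξ < R}

def potentialTerm (R β : ℝ) (u : EuclideanSpace ℝ (Fin N) → ℝ) (ξ : EuclideanSpace ℝ (Fin N)) :
    ℝ :=
  |u ξ| ^ (m : ℝ) * etaNorm hmN ξ ^ (-(m : ℝ)) * log (R / etaNorm hmN ξ) ^ β

def gradientTerm (R β : ℝ) (u : EuclideanSpace ℝ (Fin N) → ℝ) (ξ : EuclideanSpace ℝ (Fin N)) :
    ℝ :=
  ‖fderiv ℝ u ξ‖ ^ (m : ℝ) * log (R / etaNorm hmN ξ) ^ ((m : ℝ) + β)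

variable {hmN}

lemma sq_etaNorm (ξ : EuclideanSpace ℝ (Fin N)) :
    etaNorm hmN ξ ^ 2 = ∑ i : Fin m, ξ (Fin.castLE hmN i) ^ 2 :=
  sq_sqrt (Finset.sum_nonneg fun _ _ => sq_nonneg _)

lemma etaNorm_pos {ξ : EuclideanSpace ℝ (Fin N)} (h : ∃ i : Fin m, ξ (Fin.castLE hmN i) ≠ 0) :
    0 < etaNorm hmN ξ := by
  obtain ⟨i, hi⟩ := h
  exact sqrt_pos.2 (Finset.sum_pos' (fun _ _ => sq_nonneg _) ⟨i, Finset.mem_univ _, by positivity⟩)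

lemma continuous_etaNorm : Continuous (etaNorm hmN) := by
  unfold etaNorm; fun_prop

lemma isOpen_shell (R : ℝ) : IsOpen (shell hmN R) :=
  (isOpen_lt continuous_const continuous_etaNorm).inter
    (isOpen_lt continuous_etaNorm continuous_const)

lemma log_div_etaNorm_pos {R : ℝ} {ξ : EuclideanSpace ℝ (Fin N)} (hξ : ξ ∈ shell hmN R) :
    0 < log (R / etaNorm hmN ξ) :=
  log_pos ((one_lt_div hξ.1).2 hξ.2)

lemma continuousOn_etaNorm_rpow (R γ : ℝ) :
    ContinuousOn (fun ξ => etaNorm hmN ξ ^ γ) (shell hmN R) :=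
  continuous_etaNorm.continuousOn.rpow_const fun _ hξ => Or.inl hξ.1.ne'

lemma continuousOn_log_div_etaNorm_rpow (R γ : ℝ) :
    ContinuousOn (fun ξ => log (R / etaNorm hmN ξ) ^ γ) (shell hmN R) :=
  ((continuousOn_const.div continuous_etaNorm.continuousOn fun _ hξ => hξ.1.ne').log
    fun _ hξ => (div_pos (hξ.1.trans hξ.2) hξ.1).ne').rpow_const
    fun _ hξ => Or.inl (log_div_etaNorm_pos hξ).ne'

lemma etaPart_apply_castLE (ξ : EuclideanSpace ℝ (Fin N)) (i : Fin m) :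
    etaPart hmN ξ (Fin.castLE hmN i) = ξ (Fin.castLE hmN i) := by
  simp [etaPart, etaUnit, Pi.single_apply, Fin.castLE_inj]

lemma norm_etaPart (ξ : EuclideanSpace ℝ (Fin N)) : ‖etaPart hmN ξ‖ = etaNorm hmN ξ := by
  rw [etaNorm, ← sqrt_sq (norm_nonneg _), ← real_inner_self_eq_norm_sq]
  congr 1
  nth_rewrite 1 [etaPart]
  simp [etaUnit, sum_inner, real_inner_smul_left, EuclideanSpace.inner_single_left,
    etaPart_apply_castLE, sq]

lemma hasFDerivAt_etaNorm {ξ : EuclideanSpace ℝ (Fin N)} (hξ : 0 < etaNorm hmN ξ) :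
    HasFDerivAt (etaNorm hmN)
      ((etaNorm hmN ξ)⁻¹ •
        ∑ i : Fin m, ξ (Fin.castLE hmN i) • EuclideanSpace.proj (𝕜 := ℝ) (Fin.castLE hmN i)) ξ := by
  have hsq : HasFDerivAt
      (fun x : EuclideanSpace ℝ (Fin N) => ∑ i : Fin m, x (Fin.castLE hmN i) ^ 2)
      (∑ i : Fin m, (2 * ξ (Fin.castLE hmN i)) • EuclideanSpace.proj (𝕜 := ℝ) (Fin.castLE hmN i))
      ξ := by
    refine HasFDerivAt.fun_sum fun i _ => ?_
    simpa using ((EuclideanSpace.proj (𝕜 := ℝ) (Fin.castLE hmN i)).hasFDerivAt (x := ξ)).pow 2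
  refine (hsq.sqrt (sqrt_pos.1 hξ).ne').congr_fderiv ?_
  simp only [Finset.smul_sum, smul_smul]
  refine Finset.sum_congr rfl fun i _ => ?_
  rw [etaNorm]
  field_simp

lemma contDiffAt_etaNorm {ξ : EuclideanSpace ℝ (Fin N)} (hξ : 0 < etaNorm hmN ξ) :
    ContDiffAt ℝ 1 (etaNorm hmN) ξ := by
  refine ContDiffAt.sqrt ?_ (sqrt_pos.1 hξ).ne'
  exact ContDiff.contDiffAt (by fun_prop)

lemma hasFDerivAt_radialField {q : ℝ → ℝ} {q' : ℝ} {ξ : EuclideanSpace ℝ (Fin N)}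
    (hξ : 0 < etaNorm hmN ξ) (hq : HasDerivAt q q' (etaNorm hmN ξ)) (i : Fin m) :
    HasFDerivAt (radialField hmN q i)
      (q (etaNorm hmN ξ) • EuclideanSpace.proj (Fin.castLE hmN i) + ξ (Fin.castLE hmN i) •
        q' • (etaNorm hmN ξ)⁻¹ •
          ∑ j : Fin m, ξ (Fin.castLE hmN j) • EuclideanSpace.proj (𝕜 := ℝ) (Fin.castLE hmN j)) ξ :=
  (hq.comp_hasFDerivAt ξ (hasFDerivAt_etaNorm hξ)).mul
    (EuclideanSpace.proj (𝕜 := ℝ) (Fin.castLE hmN i)).hasFDerivAt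

lemma sum_fderiv_radialField {q : ℝ → ℝ} {q' : ℝ} {ξ : EuclideanSpace ℝ (Fin N)}
    (hξ : 0 < etaNorm hmN ξ) (hq : HasDerivAt q q' (etaNorm hmN ξ)) :
    ∑ i : Fin m, fderiv ℝ (radialField hmN q i) ξ (etaUnit hmN i) =
      m * q (etaNorm hmN ξ) + q' * etaNorm hmN ξ := by
  simp only [(hasFDerivAt_radialField hξ hq _).fderiv]
  simp only [etaUnit, add_apply, smul_apply, PiLp.proj_apply, PiLp.single_eq_same, smul_eq_mul,
    mul_one, sum_apply, PiLp.single_apply, Fin.castLE_inj, mul_ite, mul_zero, Finset.sum_ite_eq',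
    Finset.mem_univ, ↓reduceIte, Finset.sum_add_distrib, Finset.sum_const, Finset.card_univ,
    Fintype.card_fin, nsmul_eq_mul, add_right_inj]
  calc _ = q' * (etaNorm hmN ξ)⁻¹ * ∑ i : Fin m, ξ (Fin.castLE hmN i) ^ 2 := by
        rw [Finset.mul_sum]; exact Finset.sum_congr rfl fun _ _ => by ring
    _ = q' * etaNorm hmN ξ := by rw [← sq_etaNorm]; field_simp

lemma sum_fderiv_radialField_logProfile {R β : ℝ} (hβ : β ≠ -1) {ξ : EuclideanSpace ℝ (Fin N)}
    (hξ : ξ ∈ shell hmN R) :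
    ∑ i : Fin m, fderiv ℝ (radialField hmN (logProfile R β m) i) ξ (etaUnit hmN i) =
      -(etaNorm hmN ξ ^ (-(m : ℝ)) * log (R / etaNorm hmN ξ) ^ β) := by
  have hs := hξ.1.ne'
  rw [sum_fderiv_radialField hξ.1 (hasDerivAt_logProfile hβ hξ.1 hξ.2)]
  field_simp
  ring

lemma contDiffOn_radialField {R : ℝ} {q : ℝ → ℝ} (hq : ContDiffOn ℝ 1 q (Set.Ioo 0 R))
    (i : Fin m) :
    ContDiffOn ℝ 1 (radialField hmN q i) (shell hmN R) :=
  (hq.comp (fun _ hξ => (contDiffAt_etaNorm hξ.1).contDiffWithinAt) fun _ hξ => hξ).mul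
    (EuclideanSpace.proj (𝕜 := ℝ) (Fin.castLE hmN i)).contDiff.contDiffOn

lemma sum_mul_radialField_le (ℓ : EuclideanSpace ℝ (Fin N) →L[ℝ] ℝ) (q : ℝ → ℝ)
    (ξ : EuclideanSpace ℝ (Fin N)) :
    ∑ i : Fin m, ℓ (etaUnit hmN i) * radialField hmN q i ξ ≤
      |q (etaNorm hmN ξ)| * ‖ℓ‖ * etaNorm hmN ξ := by
  calc ∑ i : Fin m, ℓ (etaUnit hmN i) * radialField hmN q i ξ
      = q (etaNorm hmN ξ) * ℓ (etaPart hmN ξ) := by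
        simp only [etaPart, map_sum, map_smul, smul_eq_mul, Finset.mul_sum, radialField]
        exact Finset.sum_congr rfl fun _ _ => by ring
    _ ≤ |q (etaNorm hmN ξ)| * (‖ℓ‖ * ‖etaPart hmN ξ‖) := by
        refine (le_abs_self _).trans ?_
        rw [abs_mul, ← Real.norm_eq_abs (ℓ _)]
        gcongr
        exact ℓ.le_opNorm _
    _ = |q (etaNorm hmN ξ)| * ‖ℓ‖ * etaNorm hmN ξ := by rw [norm_etaPart, mul_assoc]

lemma integrable_mul_radialField {R : ℝ} {q : ℝ → ℝ} (hq : ContDiffOn ℝ 1 q (Set.Ioo 0 R))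
    {φ : EuclideanSpace ℝ (Fin N) → ℝ} (hφ : Continuous φ) (hcs : HasCompactSupport φ)
    (hsupp : tsupport φ ⊆ shell hmN R) (i : Fin m) :
    Integrable (fun ξ => φ ξ * radialField hmN q i ξ) :=
  integrable_of_continuousOn_of_support_subset hcs hsupp
    (hφ.continuousOn.mul (contDiffOn_radialField hq i).continuousOn)
    ((Function.support_mul_subset_left _ _).trans (subset_tsupport φ))

lemma integrable_mul_fderiv_radialField {R : ℝ} {q : ℝ → ℝ}
    (hq : ContDiffOn ℝ 1 q (Set.Ioo 0 R)) {φ : EuclideanSpace ℝ (Fin N) → ℝ}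
    (hφ : Continuous φ) (hcs : HasCompactSupport φ) (hsupp : tsupport φ ⊆ shell hmN R)
    (i : Fin m) :
    Integrable (fun ξ => φ ξ * fderiv ℝ (radialField hmN q i) ξ (etaUnit hmN i)) :=
  integrable_of_continuousOn_of_support_subset hcs hsupp
    (hφ.continuousOn.mul (((contDiffOn_radialField hq i).continuousOn_fderiv_of_isOpen
      (isOpen_shell R) le_rfl).clm_apply continuousOn_const))
    ((Function.support_mul_subset_left _ _).trans (subset_tsupport φ))

lemma integrable_fderiv_mul_radialField {R : ℝ} {q : ℝ → ℝ}
    (hq : ContDiffOn ℝ 1 q (Set.Ioo 0 R)) {φ : EuclideanSpace ℝ (Fin N) → ℝ}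
    (hφ : ContDiff ℝ 1 φ) (hcs : HasCompactSupport φ) (hsupp : tsupport φ ⊆ shell hmN R)
    (i : Fin m) :
    Integrable (fun ξ => fderiv ℝ φ ξ (etaUnit hmN i) * radialField hmN q i ξ) :=
  integrable_of_continuousOn_of_support_subset hcs hsupp
    (((hφ.continuous_fderiv one_ne_zero).clm_apply continuous_const).continuousOn.mul
      (contDiffOn_radialField hq i).continuousOn)
    (fun ξ hξ => support_fderiv_subset ℝ fun h => hξ (by simp [h]))

theorem integral_mul_sum_fderiv_radialField {R : ℝ} {q : ℝ → ℝ}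
    (hq : ContDiffOn ℝ 1 q (Set.Ioo 0 R)) {φ : EuclideanSpace ℝ (Fin N) → ℝ}
    (hφ : ContDiff ℝ 1 φ) (hcs : HasCompactSupport φ) (hsupp : tsupport φ ⊆ shell hmN R) :
    ∫ ξ, φ ξ * ∑ i : Fin m, fderiv ℝ (radialField hmN q i) ξ (etaUnit hmN i) =
      -∫ ξ, ∑ i : Fin m, fderiv ℝ φ ξ (etaUnit hmN i) * radialField hmN q i ξ := by
  have hφF := integrable_mul_fderiv_radialField hq hφ.continuous hcs hsupp
  have hDφF := integrable_fderiv_mul_radialField hq hφ hcs hsupp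
  simp_rw [Finset.mul_sum]
  rw [integral_finsetSum _ fun i _ => hφF i, integral_finsetSum _ fun i _ => hDφF i,
    ← Finset.sum_neg_distrib]
  refine Finset.sum_congr rfl fun i _ => ?_
  exact integral_mul_fderiv_eq_neg_fderiv_mul_of_integrable (hDφF i) (hφF i)
    (integrable_mul_radialField hq hφ.continuous hcs hsupp i)
    (fun ξ _ => (hφ.differentiable one_ne_zero) ξ)
    fun ξ hξ => ((contDiffOn_radialField hq i).contDiffAt
      ((isOpen_shell R).mem_nhds (hsupp hξ))).differentiableAt one_ne_zero

lemma integrable_norm_fderiv_mul_rpow_mul_log_rpow {R β : ℝ} {φ : EuclideanSpace ℝ (Fin N) → ℝ}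
    (hφ : ContDiff ℝ 1 φ) (hcs : HasCompactSupport φ) (hsupp : tsupport φ ⊆ shell hmN R) :
    Integrable fun ξ => ‖fderiv ℝ φ ξ‖ * etaNorm hmN ξ ^ (1 - (m : ℝ)) *
      log (R / etaNorm hmN ξ) ^ (β + 1) :=
  integrable_of_continuousOn_of_support_subset hcs hsupp
    (((hφ.continuous_fderiv one_ne_zero).norm.continuousOn.mul
      (continuousOn_etaNorm_rpow R _)).mul (continuousOn_log_div_etaNorm_rpow R _))
    fun ξ hξ => support_fderiv_subset ℝ fun h => hξ (by simp [h])

theorem abs_mul_integral_le_integral_norm_fderiv {R β : ℝ} (hβ : β ≠ -1)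
    {φ : EuclideanSpace ℝ (Fin N) → ℝ} (hφ : ContDiff ℝ 1 φ) (hcs : HasCompactSupport φ)
    (hsupp : tsupport φ ⊆ shell hmN R) :
    |β + 1| * ∫ ξ, φ ξ * etaNorm hmN ξ ^ (-(m : ℝ)) * log (R / etaNorm hmN ξ) ^ β ≤
      ∫ ξ, ‖fderiv ℝ φ ξ‖ * etaNorm hmN ξ ^ (1 - (m : ℝ)) * log (R / etaNorm hmN ξ) ^ (β + 1) := by
  rw [← le_inv_mul_iff₀ (abs_pos.2 fun h => hβ (eq_neg_of_add_eq_zero_left h))]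
  set F := radialField hmN (logProfile R β m)
  have hdiv (ξ) : φ ξ * etaNorm hmN ξ ^ (-(m : ℝ)) * log (R / etaNorm hmN ξ) ^ β =
      -(φ ξ * ∑ i : Fin m, fderiv ℝ (F i) ξ (etaUnit hmN i)) := by
    by_cases hξ : ξ ∈ tsupport φ
    · rw [sum_fderiv_radialField_logProfile hβ (hsupp hξ)]; ring
    · simp [image_eq_zero_of_notMem_tsupport hξ]
  have hbound (ξ) : ∑ i : Fin m, fderiv ℝ φ ξ (etaUnit hmN i) * F i ξ ≤
      |β + 1|⁻¹ * (‖fderiv ℝ φ ξ‖ * etaNorm hmN ξ ^ (1 - (m : ℝ)) *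
        log (R / etaNorm hmN ξ) ^ (β + 1)) := by
    by_cases hξ : ξ ∈ tsupport φ
    · obtain ⟨hs, hsR⟩ := hsupp hξ
      refine (sum_mul_radialField_le _ _ ξ).trans_eq ?_
      rw [abs_logProfile hs hsR, sub_eq_neg_add, rpow_add_one hs.ne']
      ring
    · simp [fderiv_of_notMem_tsupport ℝ hξ]
  calc ∫ ξ, φ ξ * etaNorm hmN ξ ^ (-(m : ℝ)) * log (R / etaNorm hmN ξ) ^ β
      = ∫ ξ, ∑ i : Fin m, fderiv ℝ φ ξ (etaUnit hmN i) * F i ξ := by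
        simp_rw [hdiv]
        rw [integral_neg, integral_mul_sum_fderiv_radialField contDiffOn_logProfile hφ hcs hsupp,
          neg_neg]
    _ ≤ _ := by
        rw [← integral_const_mul]
        exact integral_mono (integrable_finsetSum _ fun i _ =>
          integrable_fderiv_mul_radialField contDiffOn_logProfile hφ hcs hsupp i)
          ((integrable_norm_fderiv_mul_rpow_mul_log_rpow hφ hcs hsupp).const_mul _) hbound

section Terms

variable {R β : ℝ} {u : EuclideanSpace ℝ (Fin N) → ℝ}

lemma potentialTerm_of_notMem_tsupport (hm : (m : ℝ) ≠ 0) {ξ : EuclideanSpace ℝ (Fin N)}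
    (hξ : ξ ∉ tsupport u) : potentialTerm hmN R β u ξ = 0 := by
  simp only [potentialTerm, image_eq_zero_of_notMem_tsupport hξ, abs_zero, zero_rpow hm, zero_mul]

lemma gradientTerm_of_notMem_tsupport (hm : (m : ℝ) ≠ 0) {ξ : EuclideanSpace ℝ (Fin N)}
    (hξ : ξ ∉ tsupport u) : gradientTerm hmN R β u ξ = 0 := by
  simp only [gradientTerm, fderiv_of_notMem_tsupport ℝ hξ, norm_zero, zero_rpow hm, zero_mul]

lemma potentialTerm_nonneg (hm : (m : ℝ) ≠ 0) (hsupp : tsupport u ⊆ shell hmN R)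
    (ξ : EuclideanSpace ℝ (Fin N)) : 0 ≤ potentialTerm hmN R β u ξ := by
  by_cases hξ : ξ ∈ tsupport u
  · have := log_div_etaNorm_pos (hsupp hξ)
    have := (hsupp hξ).1
    unfold potentialTerm
    positivity
  · rw [potentialTerm_of_notMem_tsupport hm hξ]

lemma gradientTerm_nonneg (hm : (m : ℝ) ≠ 0) (hsupp : tsupport u ⊆ shell hmN R)
    (ξ : EuclideanSpace ℝ (Fin N)) : 0 ≤ gradientTerm hmN R β u ξ := by
  by_cases hξ : ξ ∈ tsupport u
  · have := log_div_etaNorm_pos (hsupp hξ)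
    unfold gradientTerm
    positivity
  · rw [gradientTerm_of_notMem_tsupport hm hξ]

lemma integrable_potentialTerm (hm : 0 < (m : ℝ)) (hu : Continuous u) (hcs : HasCompactSupport u)
    (hsupp : tsupport u ⊆ shell hmN R) : Integrable (potentialTerm hmN R β u) :=
  integrable_of_continuousOn_of_support_subset hcs hsupp
    (((hu.abs.rpow_const fun _ => Or.inr hm.le).continuousOn.mul
      (continuousOn_etaNorm_rpow R _)).mul (continuousOn_log_div_etaNorm_rpow R _))
    (Function.support_subset_iff'.2 fun _ => potentialTerm_of_notMem_tsupport hm.ne')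

lemma integrable_gradientTerm (hm : 0 < (m : ℝ)) (hu : ContDiff ℝ 1 u) (hcs : HasCompactSupport u)
    (hsupp : tsupport u ⊆ shell hmN R) : Integrable (gradientTerm hmN R β u) :=
  integrable_of_continuousOn_of_support_subset hcs hsupp
    (((hu.continuous_fderiv one_ne_zero).norm.rpow_const fun _ => Or.inr hm.le).continuousOn.mul
      (continuousOn_log_div_etaNorm_rpow R _))
    (Function.support_subset_iff'.2 fun _ => gradientTerm_of_notMem_tsupport hm.ne')

lemma norm_fderiv_abs_rpow_mul_le (hm : 1 < (m : ℝ)) (hu : ContDiff ℝ 1 u)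
    (hsupp : tsupport u ⊆ shell hmN R) (ξ : EuclideanSpace ℝ (Fin N)) :
    ‖fderiv ℝ (fun x => |u x| ^ (m : ℝ)) ξ‖ * etaNorm hmN ξ ^ (1 - (m : ℝ)) *
        log (R / etaNorm hmN ξ) ^ (β + 1) ≤
      m * (potentialTerm hmN R β u ξ ^ (1 - (m : ℝ)⁻¹) *
        gradientTerm hmN R β u ξ ^ (m : ℝ)⁻¹) := by
  have hm0 : 0 < (m : ℝ) := zero_lt_one.trans hm
  by_cases hξ : ξ ∈ tsupport u
  · have hL := log_div_etaNorm_pos (hsupp hξ)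
    have hs := (hsupp hξ).1
    have hDφ : ‖fderiv ℝ (fun x => |u x| ^ (m : ℝ)) ξ‖ ≤
        m * |u ξ| ^ ((m : ℝ) - 1) * ‖fderiv ℝ u ξ‖ := by
      simpa only [Real.norm_eq_abs] using
        norm_fderiv_norm_rpow_le (hu.differentiable one_ne_zero) hm
    calc _ ≤ m * |u ξ| ^ ((m : ℝ) - 1) * ‖fderiv ℝ u ξ‖ *
            (etaNorm hmN ξ ^ (1 - (m : ℝ)) * log (R / etaNorm hmN ξ) ^ (β + 1)) := by
          rw [mul_assoc]; gcongr
      _ = _ := by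
          rw [potentialTerm, gradientTerm,
            rpow_one_sub_inv_mul_rpow_inv hm0 (abs_nonneg _) (norm_nonneg _) hs hL]
          ring
  · have := potentialTerm_nonneg (β := β) hm0.ne' hsupp ξ
    have := gradientTerm_nonneg (β := β) hm0.ne' hsupp ξ
    rw [fderiv_of_notMem_tsupport ℝ fun h => hξ (tsupport_abs_rpow_subset hm0.ne' h), norm_zero,
      zero_mul, zero_mul]
    positivity

end Terms

theorem rpow_mul_integral_le_integral_norm_fderiv_rpow {R β : ℝ} (hm : 1 < (m : ℝ))
    (hβ : β ≠ -1) {u : EuclideanSpace ℝ (Fin N) → ℝ} (hu : ContDiff ℝ 1 u)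
    (hcs : HasCompactSupport u) (hsupp : tsupport u ⊆ shell hmN R) :
    (|β + 1| / m) ^ (m : ℝ) * ∫ ξ, potentialTerm hmN R β u ξ ≤ ∫ ξ, gradientTerm hmN R β u ξ := by
  have hm0 : 0 < (m : ℝ) := zero_lt_one.trans hm
  set φ := fun ξ => |u ξ| ^ (m : ℝ)
  have hφ : ContDiff ℝ 1 φ := by simpa only [Real.norm_eq_abs] using hu.norm_rpow hm
  have hφsupp : tsupport φ ⊆ tsupport u := tsupport_abs_rpow_subset hm0.ne'
  have hφcs : HasCompactSupport φ := hcs.of_isClosed_subset (isClosed_tsupport φ) hφsupp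
  have hA0 := potentialTerm_nonneg (β := β) hm0.ne' hsupp
  have hB0 := gradientTerm_nonneg (β := β) hm0.ne' hsupp
  have hA := integrable_potentialTerm (β := β) hm0 hu.continuous hcs hsupp
  have hB := integrable_gradientTerm (β := β) hm0 hu hcs hsupp
  have key : |β + 1| / m * ∫ ξ, potentialTerm hmN R β u ξ ≤
      ∫ ξ, potentialTerm hmN R β u ξ ^ (1 - (m : ℝ)⁻¹) * gradientTerm hmN R β u ξ ^ (m : ℝ)⁻¹ :=
    calc |β + 1| / m * ∫ ξ, potentialTerm hmN R β u ξ
        = (m : ℝ)⁻¹ * (|β + 1| * ∫ ξ, potentialTerm hmN R β u ξ) := by ring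
      _ ≤ (m : ℝ)⁻¹ * ∫ ξ, ‖fderiv ℝ φ ξ‖ * etaNorm hmN ξ ^ (1 - (m : ℝ)) *
            log (R / etaNorm hmN ξ) ^ (β + 1) :=
          mul_le_mul_of_nonneg_left
            (abs_mul_integral_le_integral_norm_fderiv hβ hφ hφcs (hφsupp.trans hsupp))
            (by positivity)
      _ ≤ (m : ℝ)⁻¹ * ∫ ξ, m * (potentialTerm hmN R β u ξ ^ (1 - (m : ℝ)⁻¹) *
            gradientTerm hmN R β u ξ ^ (m : ℝ)⁻¹) :=
          mul_le_mul_of_nonneg_left (integral_mono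
            (integrable_norm_fderiv_mul_rpow_mul_log_rpow hφ hφcs (hφsupp.trans hsupp))
            ((integrable_rpow_mul_rpow (by positivity) (inv_le_one_of_one_le₀ hm.le)
              hA0 hB0 hA hB).const_mul _)
            (norm_fderiv_abs_rpow_mul_le hm hu hsupp)) (by positivity)
      _ = _ := by rw [integral_const_mul, inv_mul_cancel_left₀ hm0.ne']
  exact rpow_mul_le_of_mul_le_rpow_mul_rpow hm0 (by positivity) (integral_nonneg hA0)
    (integral_nonneg hB0) (key.trans (integral_rpow_mul_rpow_le (by positivity)
      (inv_lt_one_of_one_lt₀ hm) hA0 hB0 hA hB))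

end LogHardy

open LogHardy in
theorem stmt8_general (N m : ℕ) (hm : 1 < m) (hmN : m ≤ N) (R β : ℝ) (hβ : β < -1)
    (u : EuclideanSpace ℝ (Fin N) → ℝ) (hu : ContDiff ℝ 1 u) (hcs : HasCompactSupport u)
    (hsupp : ∀ ξ ∈ tsupport u,
      (∃ i : Fin m, ξ (Fin.castLE hmN i) ≠ 0) ∧
        Real.sqrt (∑ i : Fin m, ξ (Fin.castLE hmN i) ^ 2) < R) :
    (|β + 1| / (m : ℝ)) ^ (m : ℝ) *
        ∫ ξ in {ξ : EuclideanSpace ℝ (Fin N) |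
            Real.sqrt (∑ i : Fin m, ξ (Fin.castLE hmN i) ^ 2) < R},
          |u ξ| ^ (m : ℝ) * Real.sqrt (∑ i : Fin m, ξ (Fin.castLE hmN i) ^ 2) ^ (-(m : ℝ)) *
            Real.log (R / Real.sqrt (∑ i : Fin m, ξ (Fin.castLE hmN i) ^ 2)) ^ β ≤
      ∫ ξ in {ξ : EuclideanSpace ℝ (Fin N) |
            Real.sqrt (∑ i : Fin m, ξ (Fin.castLE hmN i) ^ 2) < R},
        ‖gradient u ξ‖ ^ (m : ℝ) *
          Real.log (R / Real.sqrt (∑ i : Fin m, ξ (Fin.castLE hmN i) ^ 2)) ^ ((m : ℝ) + β) := by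
  have hm' : (1 : ℝ) < m := by exact_mod_cast hm
  have hm0 : (m : ℝ) ≠ 0 := by positivity
  have hshell : tsupport u ⊆ shell hmN R := fun ξ hξ =>
    ⟨etaNorm_pos (hsupp ξ hξ).1, (hsupp ξ hξ).2⟩
  have hvanish {f : EuclideanSpace ℝ (Fin N) → ℝ} (hf : ∀ ξ ∉ tsupport u, f ξ = 0) :
      ∫ ξ in {ξ | etaNorm hmN ξ < R}, f ξ = ∫ ξ, f ξ :=
    setIntegral_eq_integral_of_forall_compl_eq_zero fun ξ hξ => hf ξ fun h => hξ (hshell h).2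
  have key := rpow_mul_integral_le_integral_norm_fderiv_rpow hm' hβ.ne hu hcs hshell
  rw [← hvanish fun _ => potentialTerm_of_notMem_tsupport hm0,
    ← hvanish fun _ => gradientTerm_of_notMem_tsupport hm0] at key
  simp_rw [norm_gradient]
  exact key

theorem stmt8 (N m : ℕ) (hm : 1 < m) (hmN : m ≤ N) (R β : ℝ) (hR : 0 < R) (hβ : β < -1)
    (u : EuclideanSpace ℝ (Fin N) → ℝ) (hu : ContDiff ℝ 1 u) (hcs : HasCompactSupport u)
    (hsupp : ∀ ξ ∈ tsupport u,
      (∃ i : Fin m, ξ (Fin.castLE hmN i) ≠ 0) ∧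
        Real.sqrt (∑ i : Fin m, ξ (Fin.castLE hmN i) ^ 2) < R) :
    (|β + 1| / (m : ℝ)) ^ (m : ℝ) *
        ∫ ξ in {ξ : EuclideanSpace ℝ (Fin N) |
            Real.sqrt (∑ i : Fin m, ξ (Fin.castLE hmN i) ^ 2) < R},
          |u ξ| ^ (m : ℝ) * Real.sqrt (∑ i : Fin m, ξ (Fin.castLE hmN i) ^ 2) ^ (-(m : ℝ)) *
            Real.log (R / Real.sqrt (∑ i : Fin m, ξ (Fin.castLE hmN i) ^ 2)) ^ β ≤
      ∫ ξ in {ξ : EuclideanSpace ℝ (Fin N) |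
            Real.sqrt (∑ i : Fin m, ξ (Fin.castLE hmN i) ^ 2) < R},
        ‖gradient u ξ‖ ^ (m : ℝ) *
          Real.log (R / Real.sqrt (∑ i : Fin m, ξ (Fin.castLE hmN i) ^ 2)) ^ ((m : ℝ) + β) :=
  stmt8_general N m hm hmN R β hβ u hu hcs hsupp
end
end

section
/- Let p > 1, let g be a positive C² function on Ω ⊆ ℝ^N with g^α p-harmonic for some α ≠ 0, and let v ∈ C²(ℝ) with v'(g(ξ)) ≠ 0 on Ω. Then for u := v ∘ g, Δ_p u = (p-1)|∇g|^p |v'(g)|^{p-2} [ v''(g) + ((1-α)/g) v'(g) ] on Ω. -/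
/-!
With `Φ(t) = |h'(t)|^{p-2} h'(t)`, the `p`-flux `|∇(h ∘ g)|^{p-2} ∇(h ∘ g)` equals
`Φ(g) |∇g|^{p-2} ∇g`, so the Leibniz rule `div(φ F) = φ div F + ⟪∇φ, F⟫` and
`Φ' = (p-1)|h'|^{p-2} h''` give the chain rule
`Δ_p(h ∘ g) = |h'(g)|^{p-2} (h'(g) Δ_p g + (p-1) h''(g) |∇g|^p)`.
For `h(t) = t^α` the left side vanishes, which forces `Δ_p g = (p-1) (1-α)/g |∇g|^p`;
substituting this into the chain rule for `h = v` gives the formula.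
-/

open Real

/-- The Euclidean `p`-Laplacian `div(|∇g|^{p-2} ∇g)` at a point. -/
noncomputable def pLaplacian {N : ℕ} (p : ℝ) (g : EuclideanSpace ℝ (Fin N) → ℝ)
    (ξ : EuclideanSpace ℝ (Fin N)) : ℝ :=
  ∑ i, fderiv ℝ (fun x => ‖gradient g x‖ ^ (p - 2) * gradient g x i) ξ
    (EuclideanSpace.single i 1)

open Filter Topology

theorem hasDerivAt_abs_rpow_sub_two_mul_self (p : ℝ) {y : ℝ} (hy : y ≠ 0) :
    HasDerivAt (fun t : ℝ => |t| ^ (p - 2) * t) ((p - 1) * |y| ^ (p - 2)) y := by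
  have hy' : |y| ≠ 0 := abs_ne_zero.2 hy
  refine (((hasDerivAt_abs hy).rpow_const (p := p - 2) (Or.inl hy')).mul
    (hasDerivAt_id' y)).congr_deriv ?_
  have hpow : |y| ^ (p - 2 - 1) * |y| = |y| ^ (p - 2) := by
    rw [rpow_sub_one hy', div_mul_cancel₀ _ hy']
  linear_combination (p - 2) * |y| ^ (p - 2 - 1) * sign_mul_self y + (p - 2) * hpow

section Flux

variable {E : Type*} [NormedAddCommGroup E] [InnerProductSpace ℝ E] [CompleteSpace E]

theorem gradient_comp {f : E → ℝ} {h : ℝ → ℝ} {x : E}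
    (hf : DifferentiableAt ℝ f x) (hh : DifferentiableAt ℝ h (f x)) :
    gradient (fun y => h (f y)) x = deriv h (f x) • gradient f x := by
  refine HasGradientAt.gradient ?_
  rw [hasGradientAt_iff_hasFDerivAt, map_smulₛₗ, toDual_gradient, conj_trivial]
  exact hh.hasDerivAt.comp_hasFDerivAt x hf.hasFDerivAt

noncomputable def pFlux (p : ℝ) (f : E → ℝ) (x : E) : E :=
  ‖gradient f x‖ ^ (p - 2) • gradient f x

theorem inner_gradient_pFlux (p : ℝ) {f : E → ℝ} {x : E}
    (hx : gradient f x ≠ 0) : inner ℝ (gradient f x) (pFlux p f x) = ‖gradient f x‖ ^ p := by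
  rw [pFlux, real_inner_smul_right, real_inner_self_eq_norm_sq, ← rpow_natCast,
    ← rpow_add (norm_pos_iff.2 hx)]
  norm_num

theorem DifferentiableAt.pFlux (p : ℝ) {f : E → ℝ} {x : E}
    (hf : DifferentiableAt ℝ (gradient f) x) (hx : gradient f x ≠ 0) :
    DifferentiableAt ℝ (pFlux p f) x :=
  ((hf.norm ℝ hx).rpow_const (Or.inl (norm_ne_zero_iff.2 hx))).smul hf

theorem pFlux_comp (p : ℝ) {f : E → ℝ} {h : ℝ → ℝ} {x : E}
    (hf : DifferentiableAt ℝ f x) (hh : DifferentiableAt ℝ h (f x)) :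
    pFlux p (fun y => h (f y)) x = (|deriv h (f x)| ^ (p - 2) * deriv h (f x)) • pFlux p f x := by
  rw [pFlux, pFlux, gradient_comp hf hh, norm_smul, norm_eq_abs,
    mul_rpow (abs_nonneg _) (norm_nonneg _), smul_smul, smul_smul]
  ring_nf

end Flux

section Euclidean

variable {ι : Type*} [Fintype ι] [DecidableEq ι]

noncomputable def divergence (F : EuclideanSpace ℝ ι → EuclideanSpace ℝ ι)
    (ξ : EuclideanSpace ℝ ι) : ℝ :=
  ∑ i, fderiv ℝ (fun x => F x i) ξ (EuclideanSpace.single i 1)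

theorem gradient_apply (f : EuclideanSpace ℝ ι → ℝ) (x : EuclideanSpace ℝ ι) (i : ι) :
    gradient f x i = fderiv ℝ f x (EuclideanSpace.single i 1) := by
  rw [← inner_gradient_left, EuclideanSpace.inner_single_right]
  simp

theorem ContDiffAt.gradient {f : EuclideanSpace ℝ ι → ℝ} {x : EuclideanSpace ℝ ι}
    {n : WithTop ℕ∞} (hf : ContDiffAt ℝ (n + 1) f x) : ContDiffAt ℝ n (gradient f) x :=
  contDiffAt_euclidean.2 fun i => by
    simp_rw [gradient_apply]
    exact (hf.fderiv_right le_rfl).clm_apply contDiffAt_const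

theorem divergence_congr {F G : EuclideanSpace ℝ ι → EuclideanSpace ℝ ι}
    {ξ : EuclideanSpace ℝ ι} (h : F =ᶠ[𝓝 ξ] G) : divergence F ξ = divergence G ξ :=
  Finset.sum_congr rfl fun i _ => by
    rw [(show (fun x => F x i) =ᶠ[𝓝 ξ] fun x => G x i from h.fun_comp (· i)).fderiv_eq]

theorem divergence_smul {φ : EuclideanSpace ℝ ι → ℝ}
    {F : EuclideanSpace ℝ ι → EuclideanSpace ℝ ι} {ξ : EuclideanSpace ℝ ι}
    (hφ : DifferentiableAt ℝ φ ξ) (hF : DifferentiableAt ℝ F ξ) :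
    divergence (fun x => φ x • F x) ξ =
      φ ξ * divergence F ξ + inner ℝ (gradient φ ξ) (F ξ) := by
  simp only [divergence, PiLp.smul_apply, smul_eq_mul, Finset.mul_sum, PiLp.inner_apply,
    gradient_apply, ← Finset.sum_add_distrib]
  refine Finset.sum_congr rfl fun i _ => ?_
  rw [fderiv_fun_mul hφ ((differentiableAt_piLp 2).1 hF i)]
  simp

end Euclidean

theorem pLaplacian_eq_divergence_pFlux {N : ℕ} (p : ℝ) (f : EuclideanSpace ℝ (Fin N) → ℝ)
    (ξ : EuclideanSpace ℝ (Fin N)) : pLaplacian p f ξ = divergence (pFlux p f) ξ := rfl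

theorem pLaplacian_comp {N : ℕ} (p : ℝ) {f : EuclideanSpace ℝ (Fin N) → ℝ} {h : ℝ → ℝ}
    {ξ : EuclideanSpace ℝ (Fin N)} (hf : ContDiffAt ℝ 2 f ξ) (hgrad : gradient f ξ ≠ 0)
    (hh : ContDiffAt ℝ 2 h (f ξ)) (hh' : deriv h (f ξ) ≠ 0) :
    pLaplacian p (fun x => h (f x)) ξ =
      |deriv h (f ξ)| ^ (p - 2) * (deriv h (f ξ) * pLaplacian p f ξ +
        (p - 1) * deriv (deriv h) (f ξ) * ‖gradient f ξ‖ ^ p) := by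
  set Φ : ℝ → ℝ := fun t => |deriv h t| ^ (p - 2) * deriv h t
  have hΦ : HasDerivAt Φ ((p - 1) * |deriv h (f ξ)| ^ (p - 2) * deriv (deriv h) (f ξ)) (f ξ) :=
    (hasDerivAt_abs_rpow_sub_two_mul_self p hh').comp (f ξ)
      ((hh.derivWithin (m := 1) le_rfl).differentiableAt one_ne_zero).hasDerivAt
  have hflux : pFlux p (fun x => h (f x)) =ᶠ[𝓝 ξ] fun x => Φ (f x) • pFlux p f x := by
    filter_upwards [hf.eventually (by simp), hf.continuousAt.eventually (hh.eventually (by simp))]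
      with x hfx hhx
    exact pFlux_comp p (hfx.differentiableAt two_ne_zero) (hhx.differentiableAt two_ne_zero)
  have hfd : DifferentiableAt ℝ f ξ := hf.differentiableAt two_ne_zero
  rw [pLaplacian_eq_divergence_pFlux, divergence_congr hflux,
    divergence_smul (φ := fun x => Φ (f x)) (hΦ.differentiableAt.comp ξ hfd)
      (((hf.gradient (n := 1)).differentiableAt one_ne_zero).pFlux p hgrad),
    gradient_comp hfd hΦ.differentiableAt, real_inner_smul_left, inner_gradient_pFlux p hgrad,
    hΦ.deriv, ← pLaplacian_eq_divergence_pFlux]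
  ring

theorem pLaplacian_eq_of_pLaplacian_rpow_eq_zero {N : ℕ} (p : ℝ) {α : ℝ} (hα : α ≠ 0)
    {f : EuclideanSpace ℝ (Fin N) → ℝ} {ξ : EuclideanSpace ℝ (Fin N)}
    (hf : ContDiffAt ℝ 2 f ξ) (hpos : 0 < f ξ) (hgrad : gradient f ξ ≠ 0)
    (hharm : pLaplacian p (fun x => f x ^ α) ξ = 0) :
    pLaplacian p f ξ = (p - 1) * ((1 - α) / f ξ) * ‖gradient f ξ‖ ^ p := by
  have hderiv : deriv (fun t : ℝ => t ^ α) (f ξ) = α * f ξ ^ (α - 1) :=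
    Real.deriv_rpow_const _ _
  have hderiv2 : deriv (deriv fun t : ℝ => t ^ α) (f ξ) = α * ((α - 1) * f ξ ^ (α - 2)) := by
    rw [deriv_rpow_const', deriv_const_mul_field, Real.deriv_rpow_const]
    ring_nf
  have hderiv_ne : α * f ξ ^ (α - 1) ≠ 0 := mul_ne_zero hα (rpow_pos_of_pos hpos _).ne'
  rw [pLaplacian_comp p hf hgrad (contDiffAt_rpow_const_of_ne hpos.ne') (hderiv ▸ hderiv_ne),
    hderiv2, hderiv] at hharm
  have hbracket := (mul_eq_zero.1 hharm).resolve_left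
    (rpow_pos_of_pos (abs_pos.2 hderiv_ne) _).ne'
  have hpow : f ξ ^ (α - 1) = f ξ ^ (α - 2) * f ξ := by
    rw [← rpow_add_one hpos.ne']
    ring_nf
  rw [hpow] at hbracket
  field_simp
  apply mul_left_cancel₀ (mul_ne_zero hα (rpow_pos_of_pos hpos (α - 2)).ne')
  linear_combination hbracket

theorem stmt11_general (N : ℕ) (p α : ℝ) (hα : α ≠ 0)
    (Ω : Set (EuclideanSpace ℝ (Fin N))) (hΩ : IsOpen Ω)
    (g : EuclideanSpace ℝ (Fin N) → ℝ) (hg : ContDiffOn ℝ 2 g Ω)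
    (hgpos : ∀ ξ ∈ Ω, 0 < g ξ) (hgrad : ∀ ξ ∈ Ω, gradient g ξ ≠ 0)
    (hharm : ∀ ξ ∈ Ω, pLaplacian p (fun x => g x ^ α) ξ = 0)
    (v : ℝ → ℝ) (hv : ContDiff ℝ 2 v) (hv' : ∀ ξ ∈ Ω, deriv v (g ξ) ≠ 0) :
    ∀ ξ ∈ Ω, pLaplacian p (fun x => v (g x)) ξ =
      (p - 1) * ‖gradient g ξ‖ ^ p * |deriv v (g ξ)| ^ (p - 2) *
        (deriv (deriv v) (g ξ) + (1 - α) / g ξ * deriv v (g ξ)) := by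
  intro ξ hξ
  have hgξ : ContDiffAt ℝ 2 g ξ := hg.contDiffAt (hΩ.mem_nhds hξ)
  have hlap_g := pLaplacian_eq_of_pLaplacian_rpow_eq_zero p hα hgξ (hgpos ξ hξ) (hgrad ξ hξ)
    (hharm ξ hξ)
  rw [pLaplacian_comp p hgξ (hgrad ξ hξ) hv.contDiffAt (hv' ξ hξ), hlap_g]
  ring

theorem stmt11 (N : ℕ) (p α : ℝ) (hp : 1 < p) (hα : α ≠ 0)
    (Ω : Set (EuclideanSpace ℝ (Fin N))) (hΩ : IsOpen Ω)
    (g : EuclideanSpace ℝ (Fin N) → ℝ) (hg : ContDiffOn ℝ 2 g Ω)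
    (hgpos : ∀ ξ ∈ Ω, 0 < g ξ) (hgrad : ∀ ξ ∈ Ω, gradient g ξ ≠ 0)
    (hharm : ∀ ξ ∈ Ω, pLaplacian p (fun x => g x ^ α) ξ = 0)
    (v : ℝ → ℝ) (hv : ContDiff ℝ 2 v) (hv' : ∀ ξ ∈ Ω, deriv v (g ξ) ≠ 0) :
    ∀ ξ ∈ Ω, pLaplacian p (fun x => v (g x)) ξ =
      (p - 1) * ‖gradient g ξ‖ ^ p * |deriv v (g ξ)| ^ (p - 2) *
        (deriv (deriv v) (g ξ) + (1 - α) / g ξ * deriv v (g ξ)) :=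
  stmt11_general N p α hα Ω hΩ g hg hgpos hgrad hharm v hv hv'
end
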